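/- Let Σ=(G,σ) be a balanced connected signed graph whose underlying graph G has diameter d ≥ 4. Then λ_n(D^max(Σ)) ≤ −2d+3 and λ_n(D^min(Σ)) ≤ −2d+3. -/

import Mathlib

/-!
In a balanced signed graph every closed walk has sign `1`, so the sign of a walk depends only on
its endpoints and equals `s x * s y` for a switching function `s : V → {±1}`. Hence all shortest
`x`–`y` paths have the same sign, `D^max = D^min = S D S` with `S = diagonal s` an involution,
and both matrices have the spectrum of the distance matrix `D` of `G`. On a geodesic
`v₀ v₁ … v_d` the vector `e_{v₀} + e_{v₁} - e_{v_{d-1}} - e_{v_d}` has Rayleigh quotient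
`-2d + 3` for `D`.
-/

/-- The least (real) eigenvalue `λₙ` of a matrix. -/
noncomputable def lambdaMin {V : Type*} [Fintype V] (M : Matrix V V ℝ) : ℝ :=
  sInf {μ : ℝ | ∃ x : V → ℝ, x ≠ 0 ∧ M.mulVec x = μ • x}

/-- The sign of a walk: the product of the signs of its edges. -/
noncomputable def walkSign {V : Type*} {G : SimpleGraph V} (σ : V → V → ℝ)
    {u v : V} (p : G.Walk u v) : ℝ :=
  (p.darts.map fun d => σ d.toProd.1 d.toProd.2).prod

/-- `σ` is a signature for `G`: symmetric, and `±1` on every edge. -/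
def EdgeSigns {V : Type*} (G : SimpleGraph V) (σ : V → V → ℝ) : Prop :=
  (∀ u v, σ u v = σ v u) ∧ ∀ u v, G.Adj u v → σ u v = 1 ∨ σ u v = -1

/-- A signed graph is balanced if every cycle has positive sign. -/
def IsBalanced {V : Type*} (G : SimpleGraph V) (σ : V → V → ℝ) : Prop :=
  ∀ (u : V) (p : G.Walk u u), p.IsCycle → walkSign σ p = 1

/-- `σ_max(u,v)`: the maximum sign of a shortest `u`–`v` path. -/
noncomputable def sigmaMax {V : Type*} (G : SimpleGraph V) (σ : V → V → ℝ) (u v : V) : ℝ :=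
  sSup {s : ℝ | ∃ p : G.Walk u v, p.length = G.dist u v ∧ walkSign σ p = s}

/-- `σ_min(u,v)`: the minimum sign of a shortest `u`–`v` path. -/
noncomputable def sigmaMin {V : Type*} (G : SimpleGraph V) (σ : V → V → ℝ) (u v : V) : ℝ :=
  sInf {s : ℝ | ∃ p : G.Walk u v, p.length = G.dist u v ∧ walkSign σ p = s}

/-- The signed distance matrix `D^max(Σ)`. -/
noncomputable def Dmax {V : Type*} (G : SimpleGraph V) (σ : V → V → ℝ) : Matrix V V ℝ :=
  fun u v => sigmaMax G σ u v * (G.dist u v : ℝ)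

/-- The signed distance matrix `D^min(Σ)`. -/
noncomputable def Dmin {V : Type*} (G : SimpleGraph V) (σ : V → V → ℝ) : Matrix V V ℝ :=
  fun u v => sigmaMin G σ u v * (G.dist u v : ℝ)

/-- `G` has diameter `d`. -/
def HasDiameter {V : Type*} (G : SimpleGraph V) (d : ℕ) : Prop :=
  (∀ u v, G.dist u v ≤ d) ∧ ∃ u v, G.dist u v = d

open SimpleGraph Matrix

section Spectrum

variable {ι : Type*} [Fintype ι]

lemma bddBelow_eigenvalues (M : Matrix ι ι ℝ) :
    BddBelow {μ : ℝ | ∃ x : ι → ℝ, x ≠ 0 ∧ M *ᵥ x = μ • x} := by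
  classical
  refine (Module.End.finite_hasEigenvalue (toLin' M)).subset ?_ |>.bddBelow
  rintro μ ⟨x, hx, hMx⟩
  exact Module.End.hasEigenvalue_of_hasEigenvector
    ⟨Module.End.mem_eigenspace_iff.mpr (by simpa using hMx), hx⟩

lemma exists_eigenvalue_le_of_dotProduct_mulVec_le [DecidableEq ι] {M : Matrix ι ι ℝ}
    (hM : M.IsHermitian) {x : ι → ℝ} (hx : x ≠ 0) {c : ℝ}
    (hc : x ⬝ᵥ M *ᵥ x ≤ c * (x ⬝ᵥ x)) :
    ∃ μ ≤ c, ∃ y : ι → ℝ, y ≠ 0 ∧ M *ᵥ y = μ • y := by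
  set N := M - c • (1 : Matrix ι ι ℝ)
  have hN : N.IsHermitian := hM.sub (isHermitian_one.smul (IsSelfAdjoint.all c))
  have hnot : ¬ N.PosDef := fun h => by
    have := h.dotProduct_mulVec_pos hx
    simp only [N, sub_mulVec, smul_mulVec, one_mulVec, dotProduct_sub, dotProduct_smul,
      star_trivial, smul_eq_mul] at this
    linarith
  obtain ⟨i, hi⟩ : ∃ i, hN.eigenvalues i ≤ 0 := by
    simpa [hN.posDef_iff_eigenvalues_pos] using hnot
  set v := hN.eigenvectorBasis i
  have hv : (v : ι → ℝ) ≠ 0 := fun h =>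
    hN.eigenvectorBasis.orthonormal.ne_zero i (by ext j; simpa using congrFun h j)
  refine ⟨c + hN.eigenvalues i, by linarith, v, hv, ?_⟩
  have hNv : N *ᵥ v = hN.eigenvalues i • v := hN.mulVec_eigenvectorBasis i
  rw [add_smul, ← hNv]
  simp [N, sub_mulVec, smul_mulVec]

lemma lambdaMin_le_of_dotProduct_mulVec_le [DecidableEq ι] {M : Matrix ι ι ℝ}
    (hM : M.IsHermitian) {x : ι → ℝ} (hx : x ≠ 0) {c : ℝ}
    (hc : x ⬝ᵥ M *ᵥ x ≤ c * (x ⬝ᵥ x)) : lambdaMin M ≤ c := by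
  obtain ⟨μ, hμc, y, hy, hMy⟩ := exists_eigenvalue_le_of_dotProduct_mulVec_le hM hx hc
  exact (csInf_le (bddBelow_eigenvalues M) ⟨y, hy, hMy⟩).trans hμc

end Spectrum

section Switching

variable {ι : Type*} [Fintype ι] [DecidableEq ι]

lemma lambdaMin_conj_of_mul_self_eq_one {P : Matrix ι ι ℝ} (hP : P * P = 1)
    (A : Matrix ι ι ℝ) : lambdaMin (P * A * P) = lambdaMin A := by
  have hsub : ∀ B : Matrix ι ι ℝ, {μ : ℝ | ∃ x : ι → ℝ, x ≠ 0 ∧ B *ᵥ x = μ • x} ⊆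
      {μ : ℝ | ∃ x : ι → ℝ, x ≠ 0 ∧ (P * B * P) *ᵥ x = μ • x} := by
    rintro B μ ⟨x, hx, hBx⟩
    refine ⟨P *ᵥ x, fun h => hx ?_, ?_⟩
    · rw [← one_mulVec x, ← hP, ← mulVec_mulVec, h, mulVec_zero]
    · rw [← mulVec_mulVec, mulVec_mulVec (v := x), hP, one_mulVec, ← mulVec_mulVec, hBx,
        mulVec_smul]
  have hPPAPP : P * (P * A * P) * P = A := by
    rw [← Matrix.mul_assoc, ← Matrix.mul_assoc, hP, Matrix.one_mul, Matrix.mul_assoc, hP,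
      Matrix.mul_one]
  unfold lambdaMin
  have hback := hsub (P * A * P)
  rw [hPPAPP] at hback
  rw [(hsub A).antisymm hback]

end Switching

section WalkSign

variable {V : Type*} {G : SimpleGraph V} {σ : V → V → ℝ}

@[simp] lemma walkSign_nil {u : V} : walkSign σ (Walk.nil : G.Walk u u) = 1 := by
  simp [walkSign]

@[simp] lemma walkSign_cons {u v w : V} (h : G.Adj u v) (p : G.Walk v w) :
    walkSign σ (Walk.cons h p) = σ u v * walkSign σ p := by
  simp [walkSign]

@[simp] lemma walkSign_append {u v w : V} (p : G.Walk u v) (q : G.Walk v w) :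
    walkSign σ (p.append q) = walkSign σ p * walkSign σ q := by
  simp [walkSign, Walk.darts_append]

lemma walkSign_reverse (hσ : EdgeSigns G σ) {u v : V} (p : G.Walk u v) :
    walkSign σ p.reverse = walkSign σ p := by
  simp only [walkSign, Walk.darts_reverse, List.map_reverse, List.prod_reverse, List.map_map]
  congr 1
  exact List.map_congr_left fun d _ => hσ.1 _ _

lemma walkSign_mul_self (hσ : EdgeSigns G σ) {u v : V} (p : G.Walk u v) :
    walkSign σ p * walkSign σ p = 1 := by
  induction p with
  | nil => simp
  | cons h q ih =>
    rw [walkSign_cons]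
    rcases hσ.2 _ _ h with h1 | h1 <;> rw [h1] <;> linear_combination ih

namespace IsBalanced

lemma walkSign_cons_of_isPath (hσ : EdgeSigns G σ) (hbal : IsBalanced G σ) {u v : V}
    (h : G.Adj u v) {q : G.Walk v u} (hq : q.IsPath) :
    walkSign σ (Walk.cons h q) = 1 := by
  by_cases he : s(u, v) ∈ q.edges
  · rw [hq.eq_adj_toWalk_of_mem_edges (Sym2.eq_swap ▸ he)]
    simpa [Adj.toWalk, hσ.1 v u] using walkSign_mul_self hσ h.toWalk
  · exact hbal u _ ((Walk.cons_isCycle_iff q h).mpr ⟨hq, he⟩)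

/-- Each loop cut off by `bypass` is a cycle or an edge traversed back and forth. -/
lemma walkSign_bypass [DecidableEq V] (hσ : EdgeSigns G σ) (hbal : IsBalanced G σ) {u v : V}
    (p : G.Walk u v) :
    walkSign σ p.bypass = walkSign σ p := by
  induction p with
  | nil => rfl
  | @cons u v w h p ih =>
    rw [Walk.bypass]
    split_ifs with hs
    · set t := p.bypass.takeUntil u hs
      set r := p.bypass.dropUntil u hs
      have hsplit : walkSign σ t * walkSign σ r = walkSign σ p := by
        rw [← walkSign_append, Walk.take_spec, ih]
      have hcycle : σ u v * walkSign σ t = 1 := by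
        rw [← walkSign_cons]
        exact walkSign_cons_of_isPath hσ hbal h ((Walk.bypass_isPath p).takeUntil hs)
      rw [walkSign_cons]
      linear_combination (-walkSign σ r) * hcycle + σ u v * hsplit
    · rw [walkSign_cons, walkSign_cons, ih]

lemma walkSign_eq_one_of_closed (hσ : EdgeSigns G σ) (hbal : IsBalanced G σ) {u : V}
    (p : G.Walk u u) : walkSign σ p = 1 := by
  classical
  rw [← walkSign_bypass hσ hbal, (Walk.isPath_iff_nil.mp (Walk.bypass_isPath p)).eq_nil,
    walkSign_nil]

lemma exists_walkSign_eq_mul (hσ : EdgeSigns G σ) (hbal : IsBalanced G σ) (hG : G.Connected) :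
    ∃ s : V → ℝ, (∀ x, s x * s x = 1) ∧ ∀ {x y : V} (p : G.Walk x y), walkSign σ p = s x * s y := by
  obtain ⟨r⟩ := hG.nonempty
  let path (x : V) : G.Walk r x := (hG.preconnected r x).some
  refine ⟨fun x => walkSign σ (path x), fun x => walkSign_mul_self hσ _, fun {x y} p => ?_⟩
  have hclosed := walkSign_eq_one_of_closed hσ hbal (((path x).append p).append (path y).reverse)
  rw [walkSign_append, walkSign_append, walkSign_reverse hσ] at hclosed
  linear_combination (walkSign σ (path x) * walkSign σ (path y)) * hclosed
    - walkSign σ p * walkSign_mul_self hσ (path x)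
    - walkSign σ p * walkSign σ (path x) * walkSign σ (path x) * walkSign_mul_self hσ (path y)

end IsBalanced

end WalkSign

section TestVector

variable {ι κ : Type*} [Fintype ι] [Fintype κ] [DecidableEq ι]

lemma sum_single_dotProduct_mulVec_sum_single (M : Matrix ι ι ℝ) (w : κ → ι) (c : κ → ℝ) :
    (∑ k, Pi.single (w k) (c k)) ⬝ᵥ M *ᵥ ∑ k, Pi.single (w k) (c k) =
      ∑ k, ∑ l, c k * c l * M (w k) (w l) := by
  simp only [mulVec_sum, sum_dotProduct, dotProduct_sum, mulVec_single, single_dotProduct]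
  rw [Finset.sum_comm]
  refine Finset.sum_congr rfl fun k _ => Finset.sum_congr rfl fun l _ => ?_
  simp
  ring

lemma sum_single_dotProduct_sum_single {w : κ → ι} (hw : Function.Injective w) (c : κ → ℝ) :
    (∑ k, Pi.single (w k) (c k)) ⬝ᵥ ∑ k, Pi.single (w k) (c k) = ∑ k, c k * c k := by
  classical
  simp only [sum_dotProduct, dotProduct_sum, single_dotProduct, Pi.single_apply, hw.eq_iff]
  simp

end TestVector

section Geodesic

variable {V : Type*} {G : SimpleGraph V}

lemma SimpleGraph.Walk.dist_getVert_le {u v : V} (p : G.Walk u v) {i j : ℕ} (hij : i ≤ j) :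
    G.dist (p.getVert i) (p.getVert j) ≤ j - i := by
  obtain ⟨k, rfl⟩ := Nat.exists_eq_add_of_le hij
  have := dist_le (((p.drop i).take k).copy rfl (p.drop_getVert i k))
  simp only [Walk.length_copy, Walk.take_length] at this
  omega

lemma SimpleGraph.Connected.dist_getVert_of_length_eq_dist (hG : G.Connected) {u v : V}
    {p : G.Walk u v} (hp : p.length = G.dist u v) {i j : ℕ} (hij : i ≤ j) (hj : j ≤ p.length) :
    G.dist (p.getVert i) (p.getVert j) = j - i := by
  have hstart := p.dist_getVert_le (Nat.zero_le i)
  have hend := p.dist_getVert_le hj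
  have hmid := p.dist_getVert_le hij
  have htri := (hG.dist_triangle (u := u) (v := p.getVert i) (w := v)).trans
    (Nat.add_le_add_left (hG.dist_triangle (u := p.getVert i) (v := p.getVert j) (w := v)) _)
  rw [Walk.getVert_zero] at hstart
  rw [Walk.getVert_length] at hend
  omega

lemma SimpleGraph.Connected.dist_getVert_eq_natDist (hG : G.Connected) {u v : V}
    {p : G.Walk u v} (hp : p.length = G.dist u v) {i j : ℕ} (hi : i ≤ p.length)
    (hj : j ≤ p.length) : G.dist (p.getVert i) (p.getVert j) = i.dist j := by
  rcases le_total i j with hij | hji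
  · rw [Nat.dist_eq_sub_of_le hij, hG.dist_getVert_of_length_eq_dist hp hij hj]
  · rw [SimpleGraph.dist_comm, Nat.dist_comm, Nat.dist_eq_sub_of_le hji,
      hG.dist_getVert_of_length_eq_dist hp hji hi]

end Geodesic

section DistanceMatrix

variable {V : Type*} {G : SimpleGraph V}

noncomputable def distMatrix (G : SimpleGraph V) : Matrix V V ℝ := fun x y => G.dist x y

lemma isHermitian_distMatrix : (distMatrix G).IsHermitian :=
  Matrix.IsHermitian.ext fun x y => by simp [distMatrix, SimpleGraph.dist_comm]

lemma lambdaMin_distMatrix_le [Fintype V] (hG : G.Connected) {u v : V} {d : ℕ}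
    (huv : G.dist u v = d) (hd : 3 ≤ d) : lambdaMin (distMatrix G) ≤ -2 * (d : ℝ) + 3 := by
  classical
  obtain ⟨p, hp⟩ := hG.exists_walk_length_eq_dist u v
  obtain ⟨e, rfl⟩ : ∃ e, d = e + 2 := ⟨d - 2, by omega⟩
  set pos : Fin 4 → ℕ := ![0, 1, e + 1, e + 2]
  have hpos : StrictMono pos := by
    refine Fin.strictMono_iff_lt_succ.mpr fun i => ?_
    fin_cases i <;> simp [pos]
    omega
  set w : Fin 4 → V := fun k => p.getVert (pos k)
  have hpos_le : ∀ k, pos k ≤ p.length := fun k => by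
    fin_cases k <;> simp [pos] <;> omega
  have hw : Function.Injective w := fun k l h => hpos.injective <|
    (p.isPath_of_length_eq_dist hp).getVert_injOn (hpos_le k) (hpos_le l) h
  have hdist : ∀ k l, distMatrix G (w k) (w l) = (pos k).dist (pos l) := fun k l =>
    congrArg Nat.cast (hG.dist_getVert_eq_natDist hp (hpos_le k) (hpos_le l))
  set t : Fin 4 → ℝ := ![1, 1, -1, -1]
  set x : V → ℝ := ∑ k, Pi.single (w k) (t k)
  have hxx : x ⬝ᵥ x = 4 := by
    rw [sum_single_dotProduct_sum_single hw]
    simp [Fin.sum_univ_four, t]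
    norm_num
  have hx : x ≠ 0 := fun h => by simp [h] at hxx
  refine lambdaMin_le_of_dotProduct_mulVec_le isHermitian_distMatrix hx ?_
  rw [sum_single_dotProduct_mulVec_sum_single, hxx]
  simp only [hdist]
  simp [Fin.sum_univ_four, t, pos, Nat.dist]
  linarith

end DistanceMatrix

section SignedDistance

variable {V : Type*} {G : SimpleGraph V} {σ : V → V → ℝ}

lemma shortestWalkSigns_eq_singleton (hG : G.Connected) {x y : V} {c : ℝ}
    (h : ∀ p : G.Walk x y, walkSign σ p = c) :
    {s : ℝ | ∃ p : G.Walk x y, p.length = G.dist x y ∧ walkSign σ p = s} = {c} := by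
  obtain ⟨p, hp⟩ := hG.exists_walk_length_eq_dist x y
  exact Set.eq_singleton_iff_unique_mem.mpr ⟨⟨p, hp, h p⟩, fun s ⟨q, _, hq⟩ => hq ▸ h q⟩

lemma IsBalanced.exists_Dmax_eq_Dmin_eq_conj [Fintype V] [DecidableEq V] (hσ : EdgeSigns G σ)
    (hbal : IsBalanced G σ) (hG : G.Connected) :
    ∃ s : V → ℝ, diagonal s * diagonal s = 1 ∧
      Dmax G σ = diagonal s * distMatrix G * diagonal s ∧
      Dmin G σ = diagonal s * distMatrix G * diagonal s := by
  obtain ⟨s, hs, hsign⟩ := IsBalanced.exists_walkSign_eq_mul hσ hbal hG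
  have hconj : ∀ x y, (diagonal s * distMatrix G * diagonal s) x y = s x * s y * G.dist x y := by
    intro x y
    simp only [mul_diagonal, diagonal_mul, distMatrix]
    ring
  refine ⟨s, by simp [diagonal_mul_diagonal, hs], ?_, ?_⟩
  · ext x y
    rw [hconj, Dmax, sigmaMax, shortestWalkSigns_eq_singleton hG hsign, csSup_singleton]
  · ext x y
    rw [hconj, Dmin, sigmaMin, shortestWalkSigns_eq_singleton hG hsign, csInf_singleton]

end SignedDistance

/-- For a balanced connected signed graph of diameter `d ≥ 4`,
`λₙ(D^max(Σ)) ≤ -2d + 3` and `λₙ(D^min(Σ)) ≤ -2d + 3`. -/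
theorem stmt18 (n : ℕ) (G : SimpleGraph (Fin n)) (σ : Fin n → Fin n → ℝ)
    (hG : G.Connected) (hσ : EdgeSigns G σ) (hbal : IsBalanced G σ)
    (d : ℕ) (hd : 4 ≤ d) (hdiam : HasDiameter G d) :
    lambdaMin (Dmax G σ) ≤ -2 * (d : ℝ) + 3 ∧
    lambdaMin (Dmin G σ) ≤ -2 * (d : ℝ) + 3 := by
  obtain ⟨-, u, v, huv⟩ := hdiam
  obtain ⟨s, hs, hmax, hmin⟩ := hbal.exists_Dmax_eq_Dmin_eq_conj hσ hG
  have hdist := lambdaMin_distMatrix_le hG huv (by omega)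
  rw [hmax, hmin, lambdaMin_conj_of_mul_self_eq_one hs]
  exact ⟨hdist, hdist⟩
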